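/- arXiv:1303.3679 — 2 statements merged into one kernel-verified Lean document; each statement's English description precedes it below -/
import Mathlib

section
/- Let T be a labeled transition system, let B be the weighted Büchi automaton constructed from non-blocking generalized Büchi automata G_1, …, G_n with rewards rew_1 ≥ … ≥ rew_n, and let P = T ⊗ B. For every trace τ of T and every accepting run ρ'_P of P with α(ρ'_P) = τ, it holds that C(ρ'_P) ≤ Rew(τ). -/
/-! Common definitions: labeled transition systems, Büchi automata,
generalized Büchi automata, products, weighted runs, fragments, rewards. -/

/-- A labeled transition system `T = (S, s_init, R, L)`. -/
structure LTS (S : Type*) (A : Type*) where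
  init : S
  trans : Set (S × S)
  label : S → A

namespace LTS

/-- An (infinite) trace of a transition system. -/
def IsTrace {S A : Type*} (T : LTS S A) (τ : ℕ → S) : Prop :=
  τ 0 = T.init ∧ ∀ i, (τ i, τ (i + 1)) ∈ T.trans

/-- The word produced by a trace. -/
def word {S A : Type*} (T : LTS S A) (τ : ℕ → S) : ℕ → A :=
  fun i => T.label (τ i)

end LTS

/-- A Büchi automaton `(Q, q_init, Σ, δ, F)`. -/
structure BA (Q : Type*) (A : Type*) where
  init : Q
  trans : Set (Q × A × Q)
  acc : Set Q

namespace BA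

/-- A run of a Büchi automaton over an infinite word. -/
def IsRun {Q A : Type*} (M : BA Q A) (w : ℕ → A) (ρ : ℕ → Q) : Prop :=
  ρ 0 = M.init ∧ ∀ i, (ρ i, w i, ρ (i + 1)) ∈ M.trans

/-- A run is accepting if it visits the accepting set infinitely often. -/
def IsAccepting {Q A : Type*} (M : BA Q A) (ρ : ℕ → Q) : Prop :=
  ∀ N, ∃ i, N ≤ i ∧ ρ i ∈ M.acc

/-- The language of a Büchi automaton. -/
def Lang {Q A : Type*} (M : BA Q A) : Set (ℕ → A) :=
  {w | ∃ ρ, M.IsRun w ρ ∧ M.IsAccepting ρ}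

/-- A Büchi automaton is non-blocking if every state has a successor on every letter. -/
def NonBlocking {Q A : Type*} (M : BA Q A) : Prop :=
  ∀ q σ, ∃ q', (q, σ, q') ∈ M.trans

end BA

/-- A generalized Büchi automaton with `m` acceptance sets `F_1, …, F_m`
(0-indexed as `acc 0, …, acc (m-1)`). -/
structure GBA (Q : Type*) (A : Type*) (m : ℕ) where
  init : Q
  trans : Set (Q × A × Q)
  acc : Fin m → Set Q

namespace GBA

/-- A run of a generalized Büchi automaton over an infinite word. -/
def IsRun {Q A : Type*} {m : ℕ} (M : GBA Q A m) (w : ℕ → A) (ρ : ℕ → Q) : Prop :=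
  ρ 0 = M.init ∧ ∀ i, (ρ i, w i, ρ (i + 1)) ∈ M.trans

/-- A run is accepting if it visits each acceptance set infinitely often. -/
def IsAccepting {Q A : Type*} {m : ℕ} (M : GBA Q A m) (ρ : ℕ → Q) : Prop :=
  ∀ l : Fin m, ∀ N, ∃ i, N ≤ i ∧ ρ i ∈ M.acc l

/-- The language of a generalized Büchi automaton. -/
def Lang {Q A : Type*} {m : ℕ} (M : GBA Q A m) : Set (ℕ → A) :=
  {w | ∃ ρ, M.IsRun w ρ ∧ M.IsAccepting ρ}

/-- A GBA is non-blocking if every state has a successor on every letter. -/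
def NonBlocking {Q A : Type*} {m : ℕ} (M : GBA Q A m) : Prop :=
  ∀ q σ, ∃ q', (q, σ, q') ∈ M.trans

end GBA

/-- Transitions of the product automaton `P = T ⊗ B`. -/
def ProdTrans {S A Q : Type*} (T : LTS S A) (M : BA Q A) : Set ((S × Q) × (S × Q)) :=
  {t | (t.1.1, t.2.1) ∈ T.trans ∧ (t.1.2, T.label t.1.1, t.2.2) ∈ M.trans}

/-- Accepting states `F_P = S × F` of the product automaton. -/
def ProdAcc {S A Q : Type*} (_T : LTS S A) (M : BA Q A) : Set (S × Q) :=
  {p | p.2 ∈ M.acc}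

/-- A run of the product automaton `P = T ⊗ B`. -/
def IsProdRun {S A Q : Type*} (T : LTS S A) (M : BA Q A) (ρ : ℕ → S × Q) : Prop :=
  ρ 0 = (T.init, M.init) ∧ ∀ i, (ρ i, ρ (i + 1)) ∈ ProdTrans T M

/-- An accepting run of the product automaton (visits `F_P` infinitely often). -/
def IsProdAccepting {S A Q : Type*} (T : LTS S A) (M : BA Q A) (ρ : ℕ → S × Q) : Prop :=
  ∀ N, ∃ i, N ≤ i ∧ ρ i ∈ ProdAcc T M

/-- The weight of the `j`-th step of a sequence of product states, where `W` is the
weight function of the underlying weighted Büchi automaton: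
`W_P(((s,q),(s',q'))) = W((q, L(s), q'))`. -/
def ProdStepW {S A Q : Type*} (T : LTS S A) (W : Q → A → Q → ℕ) (ρ : ℕ → S × Q)
    (j : ℕ) : ℕ :=
  W (ρ j).2 (T.label (ρ j).1) (ρ (j + 1)).2

/-- `ρ i … ρ k` is a fragment of the infinite run `ρ` (w.r.t. accepting set `F`):
both endpoints are accepting and no interior state is accepting. -/
def IsFragment {X : Type*} (F : Set X) (ρ : ℕ → X) (i k : ℕ) : Prop :=
  i < k ∧ ρ i ∈ F ∧ ρ k ∈ F ∧ ∀ j, i < j → j < k → ρ j ∉ F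

/-- Total weight of the segment from position `i` to position `k`, where `stepW j`
is the weight of the transition taken at position `j`. -/
def SegWeight (stepW : ℕ → ℕ) (i k : ℕ) : ℕ :=
  ∑ j ∈ Finset.Ico i k, stepW j

/-- The reward `C(ρ)` of the run `ρ` equals `c`: `c` is the maximum value that occurs
infinitely often in the sequence of fragment weights of `ρ`, i.e. fragments of weight `c`
occur infinitely often, and every value `v > c` occurs only finitely often. -/
def RunRewardIs {X : Type*} (F : Set X) (ρ : ℕ → X) (stepW : ℕ → ℕ) (c : ℕ) : Prop :=
  (∀ N, ∃ i k, N ≤ i ∧ IsFragment F ρ i k ∧ SegWeight stepW i k = c) ∧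
  (∀ v, c < v → ∃ N, ∀ i k, N ≤ i → IsFragment F ρ i k → SegWeight stepW i k ≠ v)

/-- A run is in prefix-suffix structure `ρ_pref · (ρ_suf)^ω` (with the first state
of `ρ_suf` accepting) iff it is eventually periodic with an accepting state at the
start of the periodic part. -/
def IsPrefixSuffix {X : Type*} (F : Set X) (ρ : ℕ → X) : Prop :=
  ∃ l k, 0 < k ∧ ρ l ∈ F ∧ ∀ i, l ≤ i → ρ (i + k) = ρ i

/-- `f 0 f 1 … f k` is a finite path w.r.t. the edge relation `E`. -/
def IsFinPath {X : Type*} (E : Set (X × X)) (f : ℕ → X) (k : ℕ) : Prop :=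
  ∀ t, t < k → (f t, f (t + 1)) ∈ E

/-- A fragment of a finite cycle `f 0 … f k`: a segment whose endpoints lie in `F` and
whose interior states do not. -/
def IsCycFrag {X : Type*} (F : Set X) (f : ℕ → X) (k i k' : ℕ) : Prop :=
  i < k' ∧ k' ≤ k ∧ f i ∈ F ∧ f k' ∈ F ∧ ∀ t, i < t → t < k' → f t ∉ F

section Construction

/-- The component set `C = {(j,l) : 1 ≤ j ≤ n, 1 ≤ l ≤ m_j} ∪ {(0,0)}` of the weighted
Büchi automaton `B`; `none` plays the role of `(0,0)` and `some ⟨j,l⟩` (0-indexed) the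
role of the component `(j+1, l+1)`. -/
abbrev BComp (n : ℕ) (m : Fin n → ℕ) : Type :=
  Option (Σ j : Fin n, Fin (m j))

variable {A : Type*} {n : ℕ} {Qs : Fin n → Type*} {m : Fin n → ℕ}

/-- The allowed moves between components of the weighted Büchi automaton `B`
(cases (1a), (1b), (2a), (2b), (2c), (2d)); `q` is the source tuple of GBA states. -/
def CompStep (G : ∀ j, GBA (Qs j) A (m j)) (q : ∀ j, Qs j) :
    BComp n m → BComp n m → Prop
  | none, none => True
  | none, some jl' => (jl'.2 : ℕ) = 0
  | some jl, none => (jl.2 : ℕ) + 1 = m jl.1 ∧ q jl.1 ∈ (G jl.1).acc jl.2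
  | some jl, some jl' =>
      (jl'.1 = jl.1 ∧ (jl'.2 : ℕ) = (jl.2 : ℕ) ∧ q jl.1 ∉ (G jl.1).acc jl.2) ∨
      (jl'.1 = jl.1 ∧ (jl'.2 : ℕ) = (jl.2 : ℕ) + 1 ∧ q jl.1 ∈ (G jl.1).acc jl.2) ∨
      ((jl.1 : ℕ) < (jl'.1 : ℕ) ∧ (jl.2 : ℕ) + 1 = m jl.1 ∧ (jl'.2 : ℕ) = 0 ∧
        q jl.1 ∈ (G jl.1).acc jl.2)

/-- The weight of a transition of `B`, determined by the source and target components: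
`rew j'` when newly entering the first component of layer `j'` (cases (1b), (2c)),
and `0` otherwise. -/
def CompWeight (rew : Fin n → ℕ) : BComp n m → BComp n m → ℕ
  | _, none => 0
  | c, some jl' => if (jl'.2 : ℕ) = 0 ∧ c ≠ some jl' then rew jl'.1 else 0

/-- The weighted Büchi automaton `B` built from the non-blocking GBAs `G 0, …, G (n-1)`:
state set `Q_1 × … × Q_n × C`, initial state `(q_init,1, …, q_init,n, (0,0))`,
accepting set `Q_1 × … × Q_n × {(0,0)}`. -/
def BAut (G : ∀ j, GBA (Qs j) A (m j)) (_rew : Fin n → ℕ) :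
    BA ((∀ j, Qs j) × BComp n m) A where
  init := (fun j => (G j).init, none)
  trans := {t | (∀ j, (t.1.1 j, t.2.1, t.2.2.1 j) ∈ (G j).trans) ∧
              CompStep G t.1.1 t.1.2 t.2.2.2}
  acc := {p | p.2 = none}

/-- The weight function `W : δ → ℕ` of the weighted Büchi automaton `B`. -/
def BWeight (rew : Fin n → ℕ) (p : (∀ j, Qs j) × BComp n m) (_ : A)
    (p' : (∀ j, Qs j) × BComp n m) : ℕ :=
  CompWeight rew p.2 p'.2

open Classical in
/-- The reward of a trace `τ` of `T`: `Rew(τ) = Σ_{i, w(τ) ∈ L(G_i)} rew_i`. -/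
noncomputable def TraceRew {S : Type*} (T : LTS S A) (G : ∀ j, GBA (Qs j) A (m j))
    (rew : Fin n → ℕ) (τ : ℕ → S) : ℕ :=
  ∑ j : Fin n, if T.word τ ∈ (G j).Lang then rew j else 0

end Construction


/-! Between two visits of `B` to `(0,0)` the layers are entered in strictly increasing order,
so each layer `j` at most once, and each entry earns `rew j`; once layer `j` is entered, the
run has to pass through every acceptance set of `G j` before it can return to `(0,0)`. Take a
fragment of weight `C(ρ)` starting so late that each `G j` whose projected run is rejecting
has stopped visiting one of its acceptance sets: every layer entered in that fragment then
carries an accepting run of `G j` on `w(τ)`, so the weight of the fragment is at most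
`Rew(τ)`. -/

theorem GBA.exists_forall_ge_notMem_acc {Q A : Type*} {k : ℕ} {M : GBA Q A k} {w : ℕ → A}
    {r : ℕ → Q} (hr : M.IsRun w r) (hw : w ∉ M.Lang) :
    ∃ l N, ∀ v, N ≤ v → r v ∉ M.acc l := by
  by_contra! h
  exact hw ⟨r, hr, h⟩

theorem GBA.exists_forall_ge_notMem_acc_of_finite {ι A : Type*} [Finite ι] {Q : ι → Type*}
    {k : ι → ℕ} {M : ∀ j, GBA (Q j) A (k j)} {w : ℕ → A} {r : ∀ j, ℕ → Q j}
    (hr : ∀ j, (M j).IsRun w (r j)) :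
    ∃ N, ∀ j, w ∉ (M j).Lang → ∃ l, ∀ v, N ≤ v → r j v ∉ (M j).acc l := by
  refine (Filter.eventually_all.2 fun j => ?_).exists (f := Filter.atTop)
  by_cases hj : w ∈ (M j).Lang
  · exact .of_forall fun _ h => (h hj).elim
  · obtain ⟨l, N, hN⟩ := GBA.exists_forall_ge_notMem_acc (hr j) hj
    exact Filter.eventually_atTop.2 ⟨N, fun N' hN' _ => ⟨l, fun v hv => hN v (hN'.trans hv)⟩⟩

section LayeredAutomaton

variable {A : Type*} {n : ℕ} {Qs : Fin n → Type*} {m : Fin n → ℕ}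

def compRank : BComp n m → ℕ
  | none => 0
  | some jl => jl.1 + 1

/-- Cases (1b) and (2c) of the construction: the moves that carry the reward `rew j`. -/
def EntersLayer (j : Fin n) (c c' : BComp n m) : Prop :=
  ∃ l : Fin (m j), (l : ℕ) = 0 ∧ c' = some ⟨j, l⟩ ∧ c ≠ c'

theorem compRank_of_entersLayer {j : Fin n} {c c' : BComp n m} (h : EntersLayer j c c') :
    compRank c' = j + 1 := by
  obtain ⟨l, -, rfl, -⟩ := h
  rfl

open Classical in
theorem compWeight_eq_sum_entersLayer (rew : Fin n → ℕ) (c c' : BComp n m) :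
    CompWeight rew c c' = ∑ j, if EntersLayer j c c' then rew j else 0 := by
  rcases c' with _ | ⟨j', l'⟩
  · simp [CompWeight, EntersLayer]
  · rw [Finset.sum_eq_single j' ?_ (by simp)]
    · simp [CompWeight, EntersLayer]
    · rintro j - hj
      rw [if_neg]
      rintro ⟨l, -, h, -⟩
      exact hj (congrArg Sigma.fst (Option.some_injective _ h)).symm

variable {G : ∀ j, GBA (Qs j) A (m j)}

theorem CompStep.compRank_le {q : ∀ j, Qs j} {c : BComp n m} {jl' : Σ j, Fin (m j)}
    (h : CompStep G q c (some jl')) : compRank c ≤ compRank (some jl') := by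
  rcases c with _ | jl
  · exact Nat.zero_le _
  · rcases h with ⟨h, -, -⟩ | ⟨h, -, -⟩ | ⟨h, -, -, -⟩
    · simp [compRank, h]
    · simp [compRank, h]
    · simp only [compRank]
      omega

theorem CompStep.compRank_lt_of_entersLayer {q : ∀ j, Qs j} {c c' : BComp n m} {j : Fin n}
    (h : CompStep G q c c') (he : EntersLayer j c c') : compRank c < compRank c' := by
  obtain ⟨l, hl, rfl, hne⟩ := he
  rcases c with _ | ⟨j₀, l₀⟩
  · simp [compRank]
  · dsimp only [CompStep] at h
    rcases h with ⟨rfl, h, -⟩ | ⟨-, h, -⟩ | ⟨h, -, -, -⟩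
    · exact absurd (by rw [Fin.ext h]) hne
    · omega
    · simp only [compRank]
      omega

theorem CompStep.eq_or_mem_acc {q : ∀ j, Qs j} {j : Fin n} {l : Fin (m j)} {c' : BComp n m}
    (h : CompStep G q (some ⟨j, l⟩) c') :
    c' = some ⟨j, l⟩ ∨ q j ∈ (G j).acc l ∧
      ((l : ℕ) + 1 = m j ∨ ∃ l' : Fin (m j), (l' : ℕ) = l + 1 ∧ c' = some ⟨j, l'⟩) := by
  rcases c' with _ | ⟨j', l'⟩
  · exact Or.inr ⟨h.2, Or.inl h.1⟩
  · dsimp only [CompStep] at h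
    rcases h with ⟨rfl, h, -⟩ | ⟨rfl, h, hq⟩ | ⟨-, h, -, hq⟩
    · left
      rw [Fin.ext h]
    · exact Or.inr ⟨hq, Or.inr ⟨l', h, rfl⟩⟩
    · exact Or.inr ⟨hq, Or.inl h⟩

variable {qs : ℕ → ∀ j, Qs j} {comp : ℕ → BComp n m}

theorem compRank_le_of_forall_ne_none (hstep : ∀ t, CompStep G (qs t) (comp t) (comp (t + 1)))
    {a b : ℕ} (hab : a ≤ b) (hne : ∀ t, a < t → t ≤ b → comp t ≠ none) :
    compRank (comp a) ≤ compRank (comp b) := by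
  induction b, hab using Nat.le_induction with
  | base => rfl
  | succ b hab ih =>
    obtain ⟨jl, hjl⟩ := Option.ne_none_iff_exists'.1 (hne (b + 1) (by omega) le_rfl)
    have h := hstep b
    rw [hjl] at h ⊢
    exact (ih fun t h₁ h₂ => hne t h₁ (by omega)).trans h.compRank_le

/-- Away from `(0,0)` the rank never decreases and each entry raises it, so a layer is entered
at most once between two visits to `(0,0)`. -/
theorem not_entersLayer_of_lt (hstep : ∀ t, CompStep G (qs t) (comp t) (comp (t + 1)))
    {i k t₁ t₂ : ℕ} (hint : ∀ t, i < t → t < k → comp t ≠ none) (hi : i ≤ t₁) (h₁₂ : t₁ < t₂)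
    (hk : t₂ < k) {j : Fin n} (he : EntersLayer j (comp t₁) (comp (t₁ + 1))) :
    ¬ EntersLayer j (comp t₂) (comp (t₂ + 1)) := fun he₂ => by
  have hle := compRank_le_of_forall_ne_none hstep (Nat.succ_le_of_lt h₁₂)
    fun t h h' => hint t (by omega) (by omega)
  have hlt := (hstep t₂).compRank_lt_of_entersLayer he₂
  rw [compRank_of_entersLayer he, ← compRank_of_entersLayer he₂] at hle
  omega

/-- After entering layer `j` the run has to climb through all its levels before it can return
to `(0,0)`, seeing every acceptance set of `G j` on the way. -/
theorem exists_mem_acc_of_le (hstep : ∀ t, CompStep G (qs t) (comp t) (comp (t + 1)))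
    {k u : ℕ} (hk : comp k = none) (hu : u ≤ k) {j : Fin n} {l l' : Fin (m j)}
    (hcu : comp u = some ⟨j, l⟩) (hl : l ≤ l') :
    ∃ v, u ≤ v ∧ v < k ∧ qs v j ∈ (G j).acc l' := by
  induction hu using Nat.decreasingInduction generalizing l with
  | self => simp [hk] at hcu
  | of_succ u hu ih =>
    have h := hstep u
    rw [hcu] at h
    rcases h.eq_or_mem_acc with hstay | ⟨hacc, hlast | ⟨l'', hl'', hnext⟩⟩
    · obtain ⟨v, hv, hvk, hv'⟩ := ih hstay hl
      exact ⟨v, by omega, hvk, hv'⟩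
    · obtain rfl : l = l' := Fin.ext (by omega)
      exact ⟨u, le_rfl, hu, hacc⟩
    · rcases eq_or_lt_of_le hl with rfl | hlt
      · exact ⟨u, le_rfl, hu, hacc⟩
      · obtain ⟨v, hv, hvk, hv'⟩ := ih hnext (by omega)
        exact ⟨v, by omega, hvk, hv'⟩

open Classical in
theorem sum_ite_entersLayer_le (hstep : ∀ t, CompStep G (qs t) (comp t) (comp (t + 1)))
    {i k : ℕ} (hfrag : IsFragment {none} comp i k) (rew : Fin n → ℕ) (j : Fin n) :
    ∑ t ∈ Finset.Ico i k, (if EntersLayer j (comp t) (comp (t + 1)) then rew j else 0) ≤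
      if ∀ l, ∃ v, i ≤ v ∧ qs v j ∈ (G j).acc l then rew j else 0 := by
  obtain ⟨-, -, hk, hint⟩ := hfrag
  by_cases hj : ∃ t₀ ∈ Finset.Ico i k, EntersLayer j (comp t₀) (comp (t₀ + 1))
  · obtain ⟨t₀, ht₀, he₀⟩ := hj
    rw [Finset.mem_Ico] at ht₀
    have hunique : ∀ t ∈ Finset.Ico i k, t ≠ t₀ → ¬ EntersLayer j (comp t) (comp (t + 1)) := by
      intro t ht hne he
      rw [Finset.mem_Ico] at ht
      rcases Nat.lt_or_gt_of_ne hne with hlt | hlt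
      · exact not_entersLayer_of_lt hstep hint ht.1 hlt ht₀.2 he he₀
      · exact not_entersLayer_of_lt hstep hint ht₀.1 hlt ht.2 he₀ he
    rw [Finset.sum_eq_single_of_mem t₀ (Finset.mem_Ico.2 ht₀) fun t ht hne => if_neg
      (hunique t ht hne), if_pos he₀, if_pos]
    obtain ⟨l₀, hl₀, hc, -⟩ := he₀
    intro l
    obtain ⟨v, hv, -, hacc⟩ := exists_mem_acc_of_le hstep hk (by omega) hc
      (l' := l) (by omega)
    exact ⟨v, by omega, hacc⟩
  · push Not at hj
    rw [Finset.sum_eq_zero fun t ht => if_neg (hj t ht)]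
    exact Nat.zero_le _

open Classical in
theorem sum_compWeight_le_of_isFragment (hstep : ∀ t, CompStep G (qs t) (comp t) (comp (t + 1)))
    {i k : ℕ} (hfrag : IsFragment {none} comp i k) (rew : Fin n → ℕ) :
    ∑ t ∈ Finset.Ico i k, CompWeight rew (comp t) (comp (t + 1)) ≤
      ∑ j, if ∀ l, ∃ v, i ≤ v ∧ qs v j ∈ (G j).acc l then rew j else 0 := by
  simp only [compWeight_eq_sum_entersLayer]
  rw [Finset.sum_comm]
  exact Finset.sum_le_sum fun j _ => sum_ite_entersLayer_le hstep hfrag rew j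

variable {S : Type*} {T : LTS S A} {rew : Fin n → ℕ} {ρ : ℕ → S × ((∀ j, Qs j) × BComp n m)}

theorem IsProdRun.compStep (hρ : IsProdRun T (BAut G rew) ρ) (t : ℕ) :
    CompStep G (ρ t).2.1 (ρ t).2.2 (ρ (t + 1)).2.2 :=
  (hρ.2 t).2.2

theorem IsProdRun.isRun_component (hρ : IsProdRun T (BAut G rew) ρ) {τ : ℕ → S}
    (hproj : ∀ i, (ρ i).1 = τ i) (j : Fin n) : (G j).IsRun (T.word τ) fun t => (ρ t).2.1 j :=
  ⟨show (ρ 0).2.1 j = _ by rw [hρ.1]; rfl,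
    fun t => by simpa only [LTS.word, ← hproj t] using (hρ.2 t).2.1 j⟩

end LayeredAutomaton

theorem statement10_general {S A : Type*} {n : ℕ} {Qs : Fin n → Type*} {m : Fin n → ℕ}
    (G : ∀ j, GBA (Qs j) A (m j)) (rew : Fin n → ℕ) (T : LTS S A) (τ : ℕ → S)
    (ρ : ℕ → S × ((∀ j, Qs j) × BComp n m)) (c : ℕ)
    (hρ : IsProdRun T (BAut G rew) ρ) (hproj : ∀ i, (ρ i).1 = τ i)
    (hc : RunRewardIs (ProdAcc T (BAut G rew)) ρ (ProdStepW T (BWeight rew) ρ) c) :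
    c ≤ TraceRew T G rew τ := by
  obtain ⟨N, hN⟩ := GBA.exists_forall_ge_notMem_acc_of_finite (hρ.isRun_component hproj)
  obtain ⟨i, k, hNi, hfrag, rfl⟩ := hc.1 N
  refine (sum_compWeight_le_of_isFragment hρ.compStep hfrag rew).trans
    (Finset.sum_le_sum fun j _ => ?_)
  split_ifs with hgood hlang
  · exact le_rfl
  · obtain ⟨l, hl⟩ := hN j hlang
    obtain ⟨v, hv, hacc⟩ := hgood l
    exact absurd hacc (hl v (hNi.trans hv))
  · exact Nat.zero_le _
  · exact le_rfl

/-- for every trace `τ` of `T` and every accepting run `ρ'_P` of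
`P = T ⊗ B` projecting onto `τ`, `C(ρ'_P) ≤ Rew(τ)`. -/
theorem statement10 {S A : Type*} [Finite S] [Finite A] {n : ℕ} {Qs : Fin n → Type*}
    [∀ j, Finite (Qs j)] {m : Fin n → ℕ} (hm : ∀ j, 0 < m j)
    (G : ∀ j, GBA (Qs j) A (m j)) (hnb : ∀ j, (G j).NonBlocking)
    (rew : Fin n → ℕ) (hrew : ∀ i j : Fin n, i ≤ j → rew j ≤ rew i)
    (T : LTS S A) (τ : ℕ → S) (htr : T.IsTrace τ)
    (ρ : ℕ → S × ((∀ j, Qs j) × BComp n m)) (c : ℕ)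
    (hρ : IsProdRun T (BAut G rew) ρ) (hacc : IsProdAccepting T (BAut G rew) ρ)
    (hproj : ∀ i, (ρ i).1 = τ i)
    (hc : RunRewardIs (ProdAcc T (BAut G rew)) ρ (ProdStepW T (BWeight rew) ρ) c) :
    c ≤ TraceRew T G rew τ :=
  statement10_general G rew T τ ρ c hρ hproj hc
end

section
/- Let T be a labeled transition system, let B be the weighted Büchi automaton constructed from non-blocking generalized Büchi automata G_1, …, G_n with rewards rew_1 ≥ … ≥ rew_n, let P = T ⊗ B, and let I ⊆ {1,…,n}. If τ is a trace of T such that w(τ) ∈ L(G_i) for all i ∈ I and w(τ) ∉ L(G_i) for all i ∉ I, then there exists an accepting run ρ_P of P in prefix-suffix structure with C(ρ_P) = Σ_{i∈I} rew_i. -/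
/-! ### Auxiliary development for Statement 12 -/

section Aux

open Classical

variable {A : Type*} {n : ℕ} {Qs : Fin n → Type*} {m : Fin n → ℕ}

/-- Every non-blocking GBA has a run over every word. -/
lemma GBA.exists_run {Q : Type*} {mm : ℕ} (M : GBA Q A mm) (h : M.NonBlocking)
    (w : ℕ → A) : ∃ ρ, M.IsRun w ρ := by
  refine ⟨fun k => Nat.rec M.init (fun k q => Classical.choose (h q (w k))) k, rfl, fun i => ?_⟩
  exact Classical.choose_spec (h _ (w i))

/-- The deterministic scheduler for the component of the weighted Büchi automaton. -/
noncomputable def sched (hm : ∀ j, 0 < m j) (G : ∀ j, GBA (Qs j) A (m j))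
    (I : Finset (Fin n)) (q : ∀ j, Qs j) : BComp n m → BComp n m
  | none => if h : I.Nonempty then some ⟨I.min' h, ⟨0, hm _⟩⟩ else none
  | some jl =>
      if q jl.1 ∈ (G jl.1).acc jl.2 then
        if h : (jl.2 : ℕ) + 1 < m jl.1 then some ⟨jl.1, ⟨(jl.2 : ℕ) + 1, h⟩⟩
        else if h' : (I.filter (fun i => jl.1 < i)).Nonempty then
          some ⟨(I.filter (fun i => jl.1 < i)).min' h', ⟨0, hm _⟩⟩
        else none
      else some jl

/-- The component sequence driven by the scheduler along a sequence of GBA-state tuples. -/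
noncomputable def cseq (hm : ∀ j, 0 < m j) (G : ∀ j, GBA (Qs j) A (m j))
    (I : Finset (Fin n)) (qb : ℕ → ∀ j, Qs j) : ℕ → BComp n m
  | 0 => none
  | t + 1 => sched hm G I (qb t) (cseq hm G I qb t)

lemma cseq_succ (hm : ∀ j, 0 < m j) (G : ∀ j, GBA (Qs j) A (m j))
    (I : Finset (Fin n)) (qb : ℕ → ∀ j, Qs j) (t : ℕ) :
    cseq hm G I qb (t + 1) = sched hm G I (qb t) (cseq hm G I qb t) := rfl

/-- Potential: sum of the rewards already collected while in a given component. -/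
noncomputable def gpot (rew : Fin n → ℕ) (I : Finset (Fin n)) : BComp n m → ℕ
  | none => 0
  | some jl => ∑ i ∈ I.filter (fun i => i ≤ jl.1), rew i

/-- Termination measure for the scheduler. -/
def mucomp (m : Fin n → ℕ) : BComp n m → ℕ
  | none => 0
  | some jl => (n - (jl.1 : ℕ)) * (Finset.univ.sup m + 1) + (m jl.1 - (jl.2 : ℕ))

lemma mucomp_pos (jl : Σ j : Fin n, Fin (m j)) : 0 < mucomp m (some jl) := by
  have := jl.2.isLt
  simp only [mucomp]
  omega

lemma filter_le_min' (I : Finset (Fin n)) (h : I.Nonempty) :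
    I.filter (fun i => i ≤ I.min' h) = {I.min' h} := by
  ext i
  simp only [Finset.mem_filter, Finset.mem_singleton]
  constructor
  · rintro ⟨hi, hle⟩; exact le_antisymm hle (I.min'_le i hi)
  · rintro rfl; exact ⟨I.min'_mem h, le_refl _⟩

lemma filter_le_next (I : Finset (Fin n)) (j : Fin n)
    (h' : (I.filter (fun i => j < i)).Nonempty) :
    I.filter (fun i => i ≤ (I.filter (fun i => j < i)).min' h')
      = insert ((I.filter (fun i => j < i)).min' h') (I.filter (fun i => i ≤ j)) := by
  set j' := (I.filter (fun i => j < i)).min' h' with hj'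
  have hj'mem : j' ∈ I.filter (fun i => j < i) := (I.filter _).min'_mem h'
  rw [Finset.mem_filter] at hj'mem
  ext i
  simp only [Finset.mem_filter, Finset.mem_insert]
  constructor
  · rintro ⟨hi, hle⟩
    rcases le_or_gt i j with h1 | h1
    · exact Or.inr ⟨hi, h1⟩
    · have : j' ≤ i := Finset.min'_le _ i (Finset.mem_filter.mpr ⟨hi, h1⟩)
      exact Or.inl (le_antisymm hle this)
  · rintro (rfl | ⟨hi, hle⟩)
    · exact ⟨hj'mem.1, le_refl _⟩
    · exact ⟨hi, le_trans hle (le_of_lt hj'mem.2)⟩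

lemma filter_le_top (I : Finset (Fin n)) (j : Fin n) (hj : j ∈ I)
    (h' : I.filter (fun i => j < i) = ∅) :
    I.filter (fun i => i ≤ j) = I := by
  ext i
  simp only [Finset.mem_filter]
  refine ⟨fun h => h.1, fun hi => ⟨hi, ?_⟩⟩
  by_contra hle
  have : i ∈ I.filter (fun i => j < i) := Finset.mem_filter.mpr ⟨hi, lt_of_not_ge hle⟩
  simp [h'] at this

/-- The scheduler takes legal component steps. -/
lemma sched_compStep (hm : ∀ j, 0 < m j) (G : ∀ j, GBA (Qs j) A (m j))
    (I : Finset (Fin n)) (q : ∀ j, Qs j) (c : BComp n m) :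
    CompStep G q c (sched hm G I q c) := by
  match c with
  | none =>
    simp only [sched]
    split
    · show ((0 : ℕ) = 0); rfl
    · trivial
  | some jl =>
    simp only [sched]
    by_cases hacc : q jl.1 ∈ (G jl.1).acc jl.2
    · rw [if_pos hacc]
      by_cases h : (jl.2 : ℕ) + 1 < m jl.1
      · rw [dif_pos h]
        exact Or.inr (Or.inl ⟨rfl, rfl, hacc⟩)
      · rw [dif_neg h]
        have hl : (jl.2 : ℕ) + 1 = m jl.1 := by have := jl.2.isLt; omega
        by_cases h' : (I.filter (fun i => jl.1 < i)).Nonempty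
        · rw [dif_pos h']
          have hmem := (I.filter (fun i => jl.1 < i)).min'_mem h'
          rw [Finset.mem_filter] at hmem
          exact Or.inr (Or.inr ⟨hmem.2, hl, rfl, hacc⟩)
        · rw [dif_neg h']
          exact ⟨hl, hacc⟩
    · rw [if_neg hacc]
      exact Or.inl ⟨rfl, rfl, hacc⟩

/-- The scheduler stays within layers of `I`. -/
lemma sched_mem (hm : ∀ j, 0 < m j) (G : ∀ j, GBA (Qs j) A (m j))
    (I : Finset (Fin n)) (q : ∀ j, Qs j) (c : BComp n m)
    (hinv : ∀ jl, c = some jl → jl.1 ∈ I) :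
    ∀ jl', sched hm G I q c = some jl' → jl'.1 ∈ I := by
  intro jl' h
  match c with
  | none =>
    simp only [sched] at h
    split at h
    · cases h; exact I.min'_mem ‹I.Nonempty›
    · cases h
  | some jl =>
    have hj := hinv jl rfl
    simp only [sched] at h
    split at h
    · split at h
      · cases h; exact hj
      · split at h
        · cases h
          have hmem := (I.filter (fun i => jl.1 < i)).min'_mem (by assumption)
          exact (Finset.mem_filter.mp hmem).1
        · cases h
    · cases h; exact hj

lemma cseq_mem (hm : ∀ j, 0 < m j) (G : ∀ j, GBA (Qs j) A (m j))
    (I : Finset (Fin n)) (qb : ℕ → ∀ j, Qs j) :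
    ∀ t jl, cseq hm G I qb t = some jl → jl.1 ∈ I := by
  intro t
  induction t with
  | zero => intro jl h; cases h
  | succ t ih => exact sched_mem hm G I (qb t) _ ih

/-- If the current acceptance set is not hit, the scheduler stalls. -/
lemma sched_stall (hm : ∀ j, 0 < m j) (G : ∀ j, GBA (Qs j) A (m j))
    (I : Finset (Fin n)) (q : ∀ j, Qs j) (jl : Σ j : Fin n, Fin (m j))
    (hacc : q jl.1 ∉ (G jl.1).acc jl.2) :
    sched hm G I q (some jl) = some jl := by
  simp only [sched]
  rw [if_neg hacc]

lemma mucomp_lt (j j' : Fin n) (l' : Fin (m j')) (l : Fin (m j))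
    (hjj : (j : ℕ) < (j' : ℕ)) (hl' : (l' : ℕ) = 0) :
    mucomp m (some ⟨j', l'⟩) < mucomp m (some ⟨j, l⟩) := by
  have hj'n : (j' : ℕ) < n := j'.isLt
  have hln : (l : ℕ) < m j := l.isLt
  have hsup : m j' ≤ Finset.univ.sup m := Finset.le_sup (Finset.mem_univ j')
  have h1 : (n - (j' : ℕ)) + 1 ≤ n - (j : ℕ) := by omega
  have h2 : ((n - (j' : ℕ)) + 1) * (Finset.univ.sup m + 1)
      ≤ (n - (j : ℕ)) * (Finset.univ.sup m + 1) := Nat.mul_le_mul_right _ h1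
  rw [add_one_mul] at h2
  simp only [mucomp]
  omega

/-- If the current acceptance set is hit, the measure strictly decreases. -/
lemma sched_mu_dec (hm : ∀ j, 0 < m j) (G : ∀ j, GBA (Qs j) A (m j))
    (I : Finset (Fin n)) (q : ∀ j, Qs j) (jl : Σ j : Fin n, Fin (m j))
    (hacc : q jl.1 ∈ (G jl.1).acc jl.2) :
    mucomp m (sched hm G I q (some jl)) < mucomp m (some jl) := by
  have hlt := jl.2.isLt
  simp only [sched]
  rw [if_pos hacc]
  by_cases h : (jl.2 : ℕ) + 1 < m jl.1
  · rw [dif_pos h]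
    simp only [mucomp]
    omega
  · rw [dif_neg h]
    by_cases h' : (I.filter (fun i => jl.1 < i)).Nonempty
    · rw [dif_pos h']
      have hmem := (I.filter (fun i => jl.1 < i)).min'_mem h'
      rw [Finset.mem_filter] at hmem
      exact mucomp_lt _ _ _ _ hmem.2 rfl
    · rw [dif_neg h']
      simp only [mucomp]
      omega

/-- Weight/potential bookkeeping for a scheduler step that does not return to `none`. -/
lemma gpot_sched_step (hm : ∀ j, 0 < m j) (G : ∀ j, GBA (Qs j) A (m j))
    (I : Finset (Fin n)) (rew : Fin n → ℕ) (q : ∀ j, Qs j) (c : BComp n m)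
    (hinv : ∀ jl, c = some jl → jl.1 ∈ I) (hne : sched hm G I q c ≠ none) :
    gpot rew I (sched hm G I q c) = gpot rew I c + CompWeight rew c (sched hm G I q c) := by
  match c with
  | none =>
    simp only [sched] at hne ⊢
    split at hne
    case isTrue h =>
      rw [dif_pos h]
      have : CompWeight rew (none : BComp n m) (some ⟨I.min' h, ⟨0, hm _⟩⟩)
          = rew (I.min' h) := by
        simp [CompWeight]
      rw [this]
      simp only [gpot, filter_le_min' I h, Finset.sum_singleton, zero_add]
    case isFalse h => exact absurd rfl hne
  | some jl =>
    simp only [sched] at hne ⊢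
    by_cases hacc : q jl.1 ∈ (G jl.1).acc jl.2
    · rw [if_pos hacc] at hne ⊢
      by_cases h : (jl.2 : ℕ) + 1 < m jl.1
      · rw [dif_pos h]
        have hw : CompWeight rew (some jl) (some ⟨jl.1, ⟨(jl.2 : ℕ) + 1, h⟩⟩) = 0 := by
          simp [CompWeight]
        rw [hw]
        simp [gpot]
      · rw [dif_neg h] at hne ⊢
        by_cases h' : (I.filter (fun i => jl.1 < i)).Nonempty
        · rw [dif_pos h']
          have hmem := (I.filter (fun i => jl.1 < i)).min'_mem h'
          rw [Finset.mem_filter] at hmem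
          have hne2 : jl ≠ ⟨(I.filter (fun i => jl.1 < i)).min' h', ⟨0, hm _⟩⟩ := by
            intro he
            exact ne_of_lt hmem.2 (congrArg Sigma.fst he)
          have hw : CompWeight rew (some jl)
              (some ⟨(I.filter (fun i => jl.1 < i)).min' h', ⟨0, hm _⟩⟩)
              = rew ((I.filter (fun i => jl.1 < i)).min' h') := by
            simp [CompWeight, hne2]
          rw [hw]
          simp only [gpot, filter_le_next I jl.1 h']
          rw [Finset.sum_insert (by
            rw [Finset.mem_filter]
            rintro ⟨-, hle⟩
            exact absurd hmem.2 (not_lt.mpr hle))]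
          exact add_comm _ _
        · rw [dif_neg h'] at hne; exact absurd rfl hne
    · rw [if_neg hacc]
      have hw : CompWeight rew (some jl) (some jl) = 0 := by simp [CompWeight]
      rw [hw]
      simp [gpot]

/-- When the scheduler returns to `none`, the full reward has been collected. -/
lemma gpot_sched_exit (hm : ∀ j, 0 < m j) (G : ∀ j, GBA (Qs j) A (m j))
    (I : Finset (Fin n)) (rew : Fin n → ℕ) (q : ∀ j, Qs j)
    (jl : Σ j : Fin n, Fin (m j)) (hj : jl.1 ∈ I)
    (hnone : sched hm G I q (some jl) = none) :
    gpot rew I (some jl : BComp n m) = ∑ i ∈ I, rew i := by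
  simp only [sched] at hnone
  split at hnone
  · split at hnone
    · cases hnone
    · split at hnone
      · cases hnone
      · have hempty : I.filter (fun i => jl.1 < i) = ∅ :=
          Finset.not_nonempty_iff_eq_empty.mp (by assumption)
        simp only [gpot, filter_le_top I jl.1 hj hempty]
  · cases hnone

/-- With `I = ∅` the component stays `none` forever. -/
lemma cseq_empty (hm : ∀ j, 0 < m j) (G : ∀ j, GBA (Qs j) A (m j))
    (qb : ℕ → ∀ j, Qs j) (hI : (∅ : Finset (Fin n)).Nonempty → False) :
    ∀ t, cseq hm G (∅ : Finset (Fin n)) qb t = none := by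
  intro t
  induction t with
  | zero => rfl
  | succ t ih =>
    rw [cseq_succ, ih]
    simp only [sched]
    rw [dif_neg (fun h => hI h)]

/-- The component sequence returns to `none` after any time. -/
lemma cseq_none_ge (hm : ∀ j, 0 < m j) (G : ∀ j, GBA (Qs j) A (m j))
    (I : Finset (Fin n)) (qb : ℕ → ∀ j, Qs j)
    (hvis : ∀ i ∈ I, ∀ l : Fin (m i), ∀ N, ∃ t, N ≤ t ∧ qb t i ∈ (G i).acc l) :
    ∀ N, ∃ t, N ≤ t ∧ cseq hm G I qb t = none := by
  have hdec : ∀ t jl, cseq hm G I qb t = some jl →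
      ∃ t2, t < t2 ∧ mucomp m (cseq hm G I qb t2) < mucomp m (cseq hm G I qb t) := by
    intro t jl hct
    have hj : jl.1 ∈ I := cseq_mem hm G I qb t jl hct
    obtain ⟨t1, ht1, hacc1⟩ := hvis jl.1 hj jl.2 t
    obtain ⟨d, rfl⟩ : ∃ d, t1 = t + d := ⟨t1 - t, by omega⟩
    clear ht1
    induction d generalizing t with
    | zero =>
      refine ⟨t + 1, Nat.lt_succ_self t, ?_⟩
      rw [cseq_succ, hct]
      exact sched_mu_dec hm G I (qb t) jl hacc1
    | succ d ih =>
      by_cases hacc : qb t jl.1 ∈ (G jl.1).acc jl.2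
      · refine ⟨t + 1, Nat.lt_succ_self t, ?_⟩
        rw [cseq_succ, hct]
        exact sched_mu_dec hm G I (qb t) jl hacc
      · have hct1 : cseq hm G I qb (t + 1) = some jl := by
          rw [cseq_succ, hct]
          exact sched_stall hm G I (qb t) jl hacc
        obtain ⟨t2, h1, h2⟩ := ih (t + 1) hct1 (by
          have : t + 1 + d = t + (d + 1) := by omega
          rw [this]; exact hacc1)
        refine ⟨t2, by omega, ?_⟩
        rw [hct1] at h2
        rw [hct]
        exact h2
  have main : ∀ k t, mucomp m (cseq hm G I qb t) ≤ k →
      ∃ t', t ≤ t' ∧ cseq hm G I qb t' = none := by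
    intro k
    induction k with
    | zero =>
      intro t hk
      match hc : cseq hm G I qb t with
      | none => exact ⟨t, le_refl t, hc⟩
      | some jl =>
        rw [hc] at hk
        exact absurd hk (by have := mucomp_pos (m := m) jl; omega)
    | succ k ih =>
      intro t hk
      match hc : cseq hm G I qb t with
      | none => exact ⟨t, le_refl t, hc⟩
      | some jl =>
        obtain ⟨t2, ht2, hlt⟩ := hdec t jl hc
        obtain ⟨t', ht', hnone⟩ := ih t2 (by rw [hc] at hlt hk; omega)
        exact ⟨t', by omega, hnone⟩
  intro N
  obtain ⟨t', ht', hnone⟩ := main (mucomp m (cseq hm G I qb N)) N (le_refl _)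
  exact ⟨t', ht', hnone⟩

/-- Every fragment of the scheduled component sequence collects exactly `∑ i ∈ I, rew i`. -/
lemma cseq_frag_weight (hm : ∀ j, 0 < m j) (G : ∀ j, GBA (Qs j) A (m j))
    (I : Finset (Fin n)) (rew : Fin n → ℕ) (qb : ℕ → ∀ j, Qs j)
    (a' b' : ℕ) (hab : a' < b') (ha : cseq hm G I qb a' = none)
    (hb : cseq hm G I qb b' = none)
    (hint : ∀ t, a' < t → t < b' → cseq hm G I qb t ≠ none) :
    ∑ t ∈ Finset.Ico a' b', CompWeight rew (cseq hm G I qb t) (cseq hm G I qb (t + 1))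
      = ∑ i ∈ I, rew i := by
  rcases Finset.eq_empty_or_nonempty I with rfl | hIne
  · have hall := cseq_empty hm G qb (fun h => by simp at h)
    simp [hall, CompWeight]
  · -- With `I` nonempty, the step after `a'` enters the first layer.
    have hfirst : cseq hm G I qb (a' + 1)
        = some ⟨I.min' hIne, ⟨0, hm _⟩⟩ := by
      rw [cseq_succ, ha]
      simp only [sched]
      rw [dif_pos hIne]
    have hab1 : a' + 1 < b' := by
      rcases Nat.lt_or_ge (a' + 1) b' with h | h
      · exact h
      · have : b' = a' + 1 := by omega
        rw [this, hfirst] at hb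
        cases hb
    have key : ∀ t, a' + 1 ≤ t → t < b' →
        ∑ s ∈ Finset.Ico a' t, CompWeight rew (cseq hm G I qb s) (cseq hm G I qb (s + 1))
          = gpot rew I (cseq hm G I qb t) := by
      intro t ht
      induction t, ht using Nat.le_induction with
      | base =>
        intro _
        rw [Finset.sum_Ico_succ_top (le_refl a'), Finset.Ico_self, Finset.sum_empty, zero_add]
        rw [ha, hfirst]
        have hw : CompWeight rew (none : BComp n m) (some ⟨I.min' hIne, ⟨0, hm _⟩⟩)
            = rew (I.min' hIne) := by simp [CompWeight]
        rw [hw]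
        simp only [gpot, filter_le_min' I hIne, Finset.sum_singleton]
      | succ t ht ih =>
        intro hlt
        have htb : t < b' := by omega
        rw [Finset.sum_Ico_succ_top (by omega : a' ≤ t), ih htb]
        have hnon : cseq hm G I qb (t + 1) ≠ none := hint (t + 1) (by omega) hlt
        rw [cseq_succ] at hnon ⊢
        exact (gpot_sched_step hm G I rew (qb t) (cseq hm G I qb t)
          (fun jl h => cseq_mem hm G I qb t jl h) hnon).symm
    have hsplit : ∑ t ∈ Finset.Ico a' b',
        CompWeight rew (cseq hm G I qb t) (cseq hm G I qb (t + 1))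
        = (∑ t ∈ Finset.Ico a' (b' - 1),
            CompWeight rew (cseq hm G I qb t) (cseq hm G I qb (t + 1)))
          + CompWeight rew (cseq hm G I qb (b' - 1)) (cseq hm G I qb (b' - 1 + 1)) := by
      have : b' = (b' - 1) + 1 := by omega
      conv_lhs => rw [this]
      rw [Finset.sum_Ico_succ_top (by omega : a' ≤ b' - 1)]
    rw [hsplit, key (b' - 1) (by omega) (by omega)]
    match hc : cseq hm G I qb (b' - 1) with
    | none => exact absurd hc (hint (b' - 1) (by omega) (by omega))
    | some jl =>
      have hb1 : cseq hm G I qb (b' - 1 + 1) = none := by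
        have : b' - 1 + 1 = b' := by omega
        rw [this, hb]
      have hj : jl.1 ∈ I := cseq_mem hm G I qb (b' - 1) jl hc
      have hexit : sched hm G I (qb (b' - 1)) (some jl) = none := by
        rw [← hc, ← cseq_succ]; exact hb1
      rw [hb1]
      have hw0 : CompWeight rew (some jl : BComp n m) none = 0 := rfl
      rw [hw0, add_zero]
      exact gpot_sched_exit hm G I rew (qb (b' - 1)) jl hj hexit

/-- The lasso reparametrization of time. -/
def useq (a L : ℕ) (t : ℕ) : ℕ := if t ≤ a then t else a + (t - a) % L

lemma useq_eq_of_le {a L t : ℕ} (h : t ≤ a) : useq a L t = t := if_pos h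

lemma useq_eq_mod {a L : ℕ} (hL : 0 < L) {t : ℕ} (h : a ≤ t) :
    useq a L t = a + (t - a) % L := by
  rcases Nat.eq_or_lt_of_le h with rfl | h
  · simp [useq]
  · exact if_neg (by omega)

lemma useq_succ {a L : ℕ} (hL : 0 < L) (t : ℕ) :
    useq a L (t + 1) = useq a L t + 1 ∨
      (useq a L t + 1 = a + L ∧ useq a L (t + 1) = a) := by
  rcases Nat.lt_or_ge t a with h | h
  · left; rw [useq_eq_of_le (by omega), useq_eq_of_le (by omega)]
  · rw [useq_eq_mod hL h, useq_eq_mod hL (by omega)]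
    have hm1 : (t + 1 - a) = (t - a) + 1 := by omega
    rw [hm1]
    have hmod := Nat.add_mod (t - a) 1 L
    have hlt : (t - a) % L < L := Nat.mod_lt _ hL
    by_cases hL1 : L = 1
    · right
      subst hL1
      omega
    · have hL2 : 1 < L := by omega
      have h1L : 1 % L = 1 := Nat.mod_eq_of_lt hL2
      rw [h1L] at hmod
      rcases Nat.lt_or_ge ((t - a) % L + 1) L with hcase | hcase
      · left
        rw [hmod, Nat.mod_eq_of_lt hcase]
        omega
      · right
        have heq : (t - a) % L + 1 = L := by omega
        rw [hmod, heq, Nat.mod_self]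
        omega

lemma useq_compat {a L : ℕ} (hL : 0 < L) {β : Sort*} (f : ℕ → β)
    (hf : f (a + L) = f a) (t : ℕ) :
    f (useq a L (t + 1)) = f (useq a L t + 1) := by
  rcases useq_succ hL t with h | ⟨h1, h2⟩
  · rw [h]
  · rw [h1, h2, hf]

lemma useq_visit {a L : ℕ} (hL : 0 < L) (t0 : ℕ) (h1 : a ≤ t0) (h2 : t0 < a + L)
    (N : ℕ) : ∃ t, N ≤ t ∧ useq a L t = t0 := by
  refine ⟨a + (t0 - a) + L * (N + 1), ?_, ?_⟩
  · have h3 : N + 1 ≤ L * (N + 1) := Nat.le_mul_of_pos_left _ hL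
    omega
  · have hgt : ¬ (a + (t0 - a) + L * (N + 1) ≤ a) := by
      have : L ≤ L * (N + 1) := Nat.le_mul_of_pos_right L (by omega)
      omega
    rw [useq, if_neg hgt]
    have : a + (t0 - a) + L * (N + 1) - a = (t0 - a) + L * (N + 1) := by
      omega
    rw [this, Nat.add_mul_mod_self_left, Nat.mod_eq_of_lt (by omega)]
    omega

end Aux

/-- Auxiliary modular arithmetic fact. -/
lemma Nat.succ_mod' (x L : ℕ) (hL : 0 < L) : (x + 1) % L = (x % L + 1) % L := by
  conv_lhs => rw [Nat.add_mod]
  by_cases h : L = 1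
  · subst h; simp
  · have h1 : 1 % L = 1 := Nat.mod_eq_of_lt (by omega)
    rw [h1]

/-- if `τ` is a trace of `T` with `w(τ) ∈ L(G_i)` exactly for `i ∈ I`,
then `P = T ⊗ B` has an accepting run in prefix-suffix structure with reward
`Σ_{i∈I} rew_i`. -/
theorem statement12 {S A : Type*} [Finite S] [Finite A] {n : ℕ} {Qs : Fin n → Type*}
    [∀ j, Finite (Qs j)] {m : Fin n → ℕ} (hm : ∀ j, 0 < m j)
    (G : ∀ j, GBA (Qs j) A (m j)) (hnb : ∀ j, (G j).NonBlocking)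
    (rew : Fin n → ℕ) (hrew : ∀ i j : Fin n, i ≤ j → rew j ≤ rew i)
    (T : LTS S A) (I : Finset (Fin n)) (τ : ℕ → S) (htr : T.IsTrace τ)
    (hin : ∀ i ∈ I, T.word τ ∈ (G i).Lang) (hout : ∀ i ∉ I, T.word τ ∉ (G i).Lang) :
    ∃ ρ, IsProdRun T (BAut G rew) ρ ∧ IsProdAccepting T (BAut G rew) ρ ∧
      IsPrefixSuffix (ProdAcc T (BAut G rew)) ρ ∧
      RunRewardIs (ProdAcc T (BAut G rew)) ρ (ProdStepW T (BWeight rew) ρ)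
        (∑ i ∈ I, rew i) := by
  classical
  -- choose runs of the GBAs over the produced word
  have hρ : ∀ j, ∃ ρj : ℕ → Qs j, (G j).IsRun (T.word τ) ρj ∧
      (j ∈ I → (G j).IsAccepting ρj) := by
    intro j
    by_cases hj : j ∈ I
    · obtain ⟨ρj, h1, h2⟩ := hin j hj
      exact ⟨ρj, h1, fun _ => h2⟩
    · obtain ⟨ρj, h1⟩ := GBA.exists_run (G j) (hnb j) (T.word τ)
      exact ⟨ρj, h1, fun h => absurd h hj⟩
  choose ρ hrun hracc using hρ
  -- a recurring combined state
  set X : ℕ → S × (∀ j, Qs j) := fun t => (τ t, fun j => ρ j t) with hXdef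
  obtain ⟨x, hxinf⟩ := Finite.exists_infinite_fiber X
  have hinf : (X ⁻¹' {x}).Infinite := Set.infinite_coe_iff.mp hxinf
  have hrec : ∀ N, ∃ t, N ≤ t ∧ X t = x := by
    intro N
    obtain ⟨t, ht, hlt⟩ := hinf.exists_gt N
    exact ⟨t, hlt.le, ht⟩
  obtain ⟨a, -, hXa⟩ := hrec 0
  -- visit times of all acceptance sets within one window
  set V : (Σ i : Fin n, Fin (m i)) → ℕ := fun p =>
    if h : p.1 ∈ I then Classical.choose (hracc p.1 h p.2 a) else a with hV
  have hVspec : ∀ p : Σ i : Fin n, Fin (m i), p.1 ∈ I →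
      a ≤ V p ∧ ρ p.1 (V p) ∈ (G p.1).acc p.2 := by
    intro p hp
    simp only [hV, dif_pos hp]
    exact Classical.choose_spec (hracc p.1 hp p.2 a)
  set Nb : ℕ := max a (Finset.univ.sup V) with hNb
  obtain ⟨b, hbge, hXb⟩ := hrec (Nb + 1)
  have haNb : a ≤ Nb := le_max_left _ _
  have hab : a < b := by omega
  set L : ℕ := b - a with hLdef
  have hL : 0 < L := by omega
  have hbeq : b = a + L := by omega
  have hXab : X (a + L) = X a := by rw [← hbeq, hXa, hXb]
  have hτab : τ (a + L) = τ a := congrArg Prod.fst hXab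
  have hqab : ∀ j, ρ j (a + L) = ρ j a := fun j => congrFun (congrArg Prod.snd hXab) j
  -- the run of the product
  set qb : ℕ → ∀ j, Qs j := fun t j => ρ j (useq a L t) with hqb
  set c : ℕ → BComp n m := cseq hm G I qb with hc
  set ρP : ℕ → S × ((∀ j, Qs j) × BComp n m) :=
    fun t => (τ (useq a L t), (fun j => ρ j (useq a L t), c t)) with hρP
  have hcompτ : ∀ t, τ (useq a L (t + 1)) = τ (useq a L t + 1) :=
    useq_compat hL τ hτab
  have hcompρ : ∀ j t, ρ j (useq a L (t + 1)) = ρ j (useq a L t + 1) :=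
    fun j => useq_compat hL (ρ j) (hqab j)
  have hvisq : ∀ i ∈ I, ∀ l : Fin (m i), ∀ N, ∃ t, N ≤ t ∧ qb t i ∈ (G i).acc l := by
    intro i hi l N
    obtain ⟨hle, hmem⟩ := hVspec ⟨i, l⟩ hi
    have hlt : V ⟨i, l⟩ < a + L := by
      have h1 : V ⟨i, l⟩ ≤ Finset.univ.sup V := Finset.le_sup (Finset.mem_univ _)
      have h2 : Finset.univ.sup V ≤ Nb := le_max_right _ _
      omega
    obtain ⟨t, htN, htu⟩ := useq_visit hL (V ⟨i, l⟩) hle hlt N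
    refine ⟨t, htN, ?_⟩
    show ρ i (useq a L t) ∈ (G i).acc l
    rw [htu]
    exact hmem
  have hnone : ∀ N, ∃ t, N ≤ t ∧ c t = none := cseq_none_ge hm G I qb hvisq
  have hFiff : ∀ t, (ρP t ∈ ProdAcc T (BAut G rew)) ↔ c t = none := fun t => Iff.rfl
  have hsw : ∀ t, ProdStepW T (BWeight rew) ρP t = CompWeight rew (c t) (c (t + 1)) :=
    fun t => rfl
  have hustat : ∀ t, a ≤ t → useq a L t = a + (t - a) % L := fun t ht => useq_eq_mod hL ht
  refine ⟨ρP, ⟨?_, ?_⟩, ?_, ?_, ?_, ?_⟩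
  · -- initial state
    have hu0 : useq a L 0 = 0 := useq_eq_of_le (Nat.zero_le a)
    show (τ (useq a L 0), (fun j => ρ j (useq a L 0), c 0)) =
      (T.init, (fun j => (G j).init, none))
    rw [hu0, htr.1]
    have h1 : (fun j => ρ j 0) = fun j => (G j).init := funext fun j => (hrun j).1
    rw [h1]
    rfl
  · -- transitions
    intro t
    refine ⟨?_, ?_, ?_⟩
    · show (τ (useq a L t), τ (useq a L (t + 1))) ∈ T.trans
      rw [hcompτ t]
      exact htr.2 (useq a L t)
    · intro j
      show (ρ j (useq a L t), T.label (τ (useq a L t)), ρ j (useq a L (t + 1)))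
        ∈ (G j).trans
      rw [hcompρ j t]
      exact (hrun j).2 (useq a L t)
    · exact sched_compStep hm G I (qb t) (c t)
  · -- accepting
    intro N
    obtain ⟨t, htN, htc⟩ := hnone N
    exact ⟨t, htN, (hFiff t).mpr htc⟩
  · -- prefix-suffix structure
    set φ : ℕ → ℕ := fun t => (t - a) % L with hφ
    have hφlt : ∀ t, φ t < L := fun t => Nat.mod_lt _ hL
    set F2 : Fin L × BComp n m → Fin L × BComp n m := fun p =>
      (⟨((p.1 : ℕ) + 1) % L, Nat.mod_lt _ hL⟩,
        sched hm G I (fun j => ρ j (a + (p.1 : ℕ))) p.2) with hF2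
    set stat : ℕ → Fin L × BComp n m := fun t => (⟨φ t, hφlt t⟩, c t) with hstat
    have hstep : ∀ t, a ≤ t → stat (t + 1) = F2 (stat t) := by
      intro t ht
      have hφs : φ (t + 1) = (φ t + 1) % L := by
        show (t + 1 - a) % L = ((t - a) % L + 1) % L
        rw [show t + 1 - a = (t - a) + 1 by omega, Nat.succ_mod' _ L hL]
      have hqeq : qb t = fun j => ρ j (a + φ t) := by
        funext j
        show ρ j (useq a L t) = ρ j (a + φ t)
        rw [hustat t ht]
      have hcs : c (t + 1) = sched hm G I (fun j => ρ j (a + φ t)) (c t) := by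
        rw [hc, cseq_succ, hqeq]
      show ((⟨φ (t + 1), hφlt _⟩ : Fin L), c (t + 1)) =
        ((⟨(φ t + 1) % L, Nat.mod_lt _ hL⟩ : Fin L),
          sched hm G I (fun j => ρ j (a + φ t)) (c t))
      simp only [Prod.mk.injEq, Fin.mk.injEq]
      exact ⟨hφs, hcs⟩
    obtain ⟨t1, t2, hne12, heq12⟩ :=
      Finite.exists_ne_map_eq_of_infinite (fun t => stat (a + t))
    have hkey : ∃ s p, 0 < p ∧ stat (a + s + p) = stat (a + s) := by
      rcases Nat.lt_or_ge t1 t2 with h | h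
      · exact ⟨t1, t2 - t1, by omega,
          by rw [show a + t1 + (t2 - t1) = a + t2 by omega]; exact heq12.symm⟩
      · have h' : t2 < t1 := by
          rcases Nat.lt_or_ge t2 t1 with h2 | h2
          · exact h2
          · exact absurd (le_antisymm h2 h) hne12
        exact ⟨t2, t1 - t2, by omega,
          by rw [show a + t2 + (t1 - t2) = a + t1 by omega]; exact heq12⟩
    obtain ⟨s, p, hp, hsp⟩ := hkey
    have hper : ∀ d, stat (a + s + d + p) = stat (a + s + d) := by
      intro d
      induction d with
      | zero => simpa using hsp
      | succ d ih =>
        have e1 : a + s + (d + 1) + p = (a + s + d + p) + 1 := by omega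
        have e2 : a + s + (d + 1) = (a + s + d) + 1 := by omega
        rw [e1, e2, hstep _ (by omega), hstep _ (by omega), ih]
    have hdet : ∀ t, a ≤ t → ρP t = (τ (a + φ t), (fun j => ρ j (a + φ t), c t)) := by
      intro t ht
      show (τ (useq a L t), (fun j => ρ j (useq a L t), c t)) = _
      rw [hustat t ht]
    have hperρ : ∀ t, a + s ≤ t → ρP (t + p) = ρP t := by
      intro t ht
      obtain ⟨d, rfl⟩ : ∃ d, t = a + s + d := ⟨t - (a + s), by omega⟩
      have h1 := hper d
      have hφeq : φ (a + s + d + p) = φ (a + s + d) :=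
        congrArg (fun q : Fin L × BComp n m => ((q.1 : Fin L) : ℕ)) h1
      have hceq : c (a + s + d + p) = c (a + s + d) :=
        congrArg Prod.snd h1
      rw [hdet _ (by omega), hdet _ (by omega), hφeq, hceq]
    obtain ⟨l, hl, hlc⟩ := hnone (a + s)
    exact ⟨l, p, hp, (hFiff l).mpr hlc, fun i hi => hperρ i (le_trans hl hi)⟩
  · -- fragments of weight ∑ occur infinitely often
    intro N
    obtain ⟨i, hiN, hic⟩ := hnone N
    have hex : ∃ k, i < k ∧ c k = none := by
      obtain ⟨t, ht, htc⟩ := hnone (i + 1)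
      exact ⟨t, by omega, htc⟩
    obtain ⟨hik, hkc⟩ := Nat.find_spec hex
    have hmin : ∀ j, i < j → j < Nat.find hex → c j ≠ none := by
      intro j h1 h2 hcj
      exact Nat.find_min hex h2 ⟨h1, hcj⟩
    refine ⟨i, Nat.find hex, hiN, ⟨hik, (hFiff i).mpr hic, (hFiff _).mpr hkc, ?_⟩, ?_⟩
    · intro j h1 h2 hjF
      exact hmin j h1 h2 ((hFiff j).mp hjF)
    · show SegWeight (ProdStepW T (BWeight rew) ρP) i (Nat.find hex) = _
      rw [SegWeight, Finset.sum_congr rfl fun t _ => hsw t]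
      exact cseq_frag_weight hm G I rew qb i (Nat.find hex) hik hic hkc hmin
  · -- no larger value occurs
    intro v hv
    refine ⟨0, fun i k _ hfrag => ?_⟩
    have h1 : c i = none := (hFiff i).mp hfrag.2.1
    have h2 : c k = none := (hFiff k).mp hfrag.2.2.1
    have h3 : ∀ t, i < t → t < k → c t ≠ none := fun t ht1 ht2 hc0 =>
      hfrag.2.2.2 t ht1 ht2 ((hFiff t).mpr hc0)
    have hwt := cseq_frag_weight hm G I rew qb i k hfrag.1 h1 h2 h3
    show SegWeight (ProdStepW T (BWeight rew) ρP) i k ≠ v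
    rw [SegWeight, Finset.sum_congr rfl fun t _ => hsw t, hwt]
    omega
end
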